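/- Let S ⊆ {1,...,n} be a set of active agents with action vector x_S having all entries in (0,1], extended by zero to inactive agents. Then x is a Nash equilibrium of the game with best responses fᵢ(x) = max(0, 1 − δ·∑ⱼ aᵢⱼxⱼ) if and only if (I + δA_S)x_S = 𝟏 and δ·(A_{N\S,S}·x_S)ᵢ ≥ 1 for every inactive agent i. -/
import Mathlib


open Matrix Finset

/-- Characterization of Nash equilibria for the game with linear best responses
`fᵢ(x) = max(0, 1 − δ·∑ⱼ aᵢⱼxⱼ)`.  Let `S` be the set of active agents, with
`x i ∈ (0,1]` for `i ∈ S` and `x i = 0` for `i ∉ S`.  Then `x` is a Nash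
equilibrium iff `(I + δ A_S) x_S = 𝟏` and `δ·(A_{N\S,S} x_S)ᵢ ≥ 1` for every
inactive agent `i`. -/
theorem nash_equilibrium_iff {n : ℕ} (A : Matrix (Fin n) (Fin n) ℝ)
    (hsymm : A.IsSymm) (h01 : ∀ i j, A i j = 0 ∨ A i j = 1)
    (hdiag : ∀ i, A i i = 0) {δ : ℝ} (hδ : 0 < δ)
    (S : Finset (Fin n)) (x : Fin n → ℝ)
    (hS : ∀ i ∈ S, 0 < x i ∧ x i ≤ 1) (hSc : ∀ i ∉ S, x i = 0) :
    (∀ i, x i = max 0 (1 - δ * ∑ j, A i j * x j)) ↔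
      ((∀ i ∈ S, x i + δ * ∑ j ∈ S, A i j * x j = 1) ∧
        (∀ i ∉ S, 1 ≤ δ * ∑ j ∈ S, A i j * x j)) := by
  have hsum : ∀ i, ∑ j, A i j * x j = ∑ j ∈ S, A i j * x j := by
    intro i
    rw [← Finset.sum_subset (Finset.subset_univ S)]
    intro j _ hj
    rw [hSc j hj, mul_zero]
  constructor
  · intro h
    constructor
    · intro i hi
      have := h i
      rw [hsum i] at this
      rcases le_or_gt (1 - δ * ∑ j ∈ S, A i j * x j) 0 with hle | hlt
      · rw [max_eq_left hle] at this
        exact absurd this (ne_of_gt (hS i hi).1)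
      · rw [max_eq_right hlt.le] at this
        linarith
    · intro i hi
      have := h i
      rw [hsum i, hSc i hi] at this
      rcases le_or_gt (1 - δ * ∑ j ∈ S, A i j * x j) 0 with hle | hlt
      · linarith
      · rw [max_eq_right hlt.le] at this; linarith
  · rintro ⟨h1, h2⟩ i
    rw [hsum i]
    by_cases hi : i ∈ S
    · have := h1 i hi
      rw [max_eq_right (by linarith [(hS i hi).1])]
      linarith
    · rw [hSc i hi, max_eq_left (by linarith [h2 i hi])]
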